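/- arXiv:1904.12776 — 5 statements merged into one kernel-verified Lean document; each statement's English description precedes it below -/
import Mathlib

section
/- Let $k, m$ be positive integers with $\gcd(k,m)=1$, and let $f(X) = C_0 X + C_1 X^{2^k} + C_2 X^{2^{2k}} + \cdots + C_d X^{2^{dk}} \in \mathbb{F}_{2^m}[X]$ be a nonzero polynomial of degree $2^{dk}$ (so $C_d \neq 0$). Then $f$ has at most $2^d$ roots in $\mathbb{F}_{2^m}$. -/
/-!
Write `σ x = x ^ 2 ^ k`; then `f x = ∑ C i * σ^i x`, and `σ` fixes only `0` and `1` because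
`gcd (2^k - 1) (2^m - 1) = 2^gcd(k,m) - 1 = 1`. For any field endomorphism `σ` with at most `q`
fixed points, such a `σ`-linear expression of `σ`-degree `d` has at most `q ^ d` roots: if
`v ≠ 0` is a root, substituting `x = v * u` and summing by parts rewrites it as `g (u - σ u)`
with `g` of `σ`-degree `d - 1`, and the additive map `u ↦ u - σ u` has the fixed points of `σ`
as kernel, so every root of `g` has at most `q` preimages.
-/

open Finset

theorem AddMonoidHom.ncard_le_ncard_mul_ncard_ker {G H : Type*} [AddGroup G] [AddGroup H]
    (φ : G →+ H) {s : Set G} {t : Set H} (hst : Set.MapsTo φ s t) (ht : t.Finite)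
    (hker : (φ.ker : Set G).Finite) :
    s.ncard ≤ t.ncard * (φ.ker : Set G).ncard := by
  -- `x ↦ (φ x, x - r (φ x))` embeds `s` into `t ×ˢ ker φ`, where `r` is a section of `φ`.
  let r := Function.invFun φ
  have hr (x : G) : φ (r (φ x)) = φ x := Function.invFun_eq ⟨x, rfl⟩
  calc s.ncard ≤ (t ×ˢ (φ.ker : Set G)).ncard := by
        refine Set.ncard_le_ncard_of_injOn (fun x ↦ (φ x, x - r (φ x))) ?_ ?_ (ht.prod hker)
        · intro x hx
          exact ⟨hst hx, by simp [hr]⟩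
        · intro x _ y _ hxy
          simp only [Prod.mk.injEq] at hxy
          simpa [hxy.1] using hxy.2
    _ = t.ncard * (φ.ker : Set G).ncard := Set.ncard_prod

section Linearized

variable {K : Type*} [Field K] (σ : K →+* K)

def linearizedEval (a : ℕ → K) (d : ℕ) (x : K) : K :=
  ∑ i ∈ range (d + 1), a i * (σ ^ i) x

theorem linearizedEval_mul (a : ℕ → K) (d : ℕ) (v x : K) :
    linearizedEval σ a d (v * x) = linearizedEval σ (fun i ↦ a i * (σ ^ i) v) d x := by
  simp only [linearizedEval, map_mul, mul_assoc]

theorem linearizedEval_succ_of_sum_eq_zero (b : ℕ → K) (d : ℕ)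
    (hb : ∑ i ∈ range (d + 2), b i = 0) (x : K) :
    linearizedEval σ b (d + 1) x =
      linearizedEval σ (fun j ↦ ∑ i ∈ range (j + 1), b i) d (x - σ x) := by
  have := Finset.sum_range_by_parts (fun i ↦ (σ ^ i) x) b (d + 2)
  simp only [smul_eq_mul, hb, mul_zero, zero_sub] at this
  simp only [linearizedEval, mul_comm (b _), this, map_sub, ← sum_neg_distrib]
  refine sum_congr rfl fun j _ ↦ ?_
  rw [pow_succ, RingHom.coe_mul, Function.comp_apply]
  ring

theorem linearizedEval_one (a : ℕ → K) (d : ℕ) :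
    linearizedEval σ a d 1 = ∑ i ∈ range (d + 1), a i := by
  simp [linearizedEval]

theorem ncard_setOf_linearizedEval_mul_eq_zero (a : ℕ → K) (d : ℕ) {v : K} (hv : v ≠ 0) :
    {x | linearizedEval σ (fun i ↦ a i * (σ ^ i) v) d x = 0}.ncard =
      {x | linearizedEval σ a d x = 0}.ncard := by
  have : {x | linearizedEval σ (fun i ↦ a i * (σ ^ i) v) d x = 0} =
      (v * ·) ⁻¹' {x | linearizedEval σ a d x = 0} := by
    ext x
    simp [linearizedEval_mul]
  rw [this, Set.ncard_preimage_of_injective_subset_range (mul_right_injective₀ hv)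
    (by simp [(mul_left_surjective₀ hv).range_eq])]

theorem ncard_setOf_linearizedEval_succ_le [Finite K] {q : ℕ}
    (hfix : {x | σ x = x}.ncard ≤ q) (b : ℕ → K) (d : ℕ)
    (hb : ∑ i ∈ range (d + 2), b i = 0) :
    {x | linearizedEval σ b (d + 1) x = 0}.ncard ≤
      {y | linearizedEval σ (fun j ↦ ∑ i ∈ range (j + 1), b i) d y = 0}.ncard * q := by
  let φ : K →+ K := AddMonoidHom.id K - σ.toAddMonoidHom
  have hker : (φ.ker : Set K) = {x | σ x = x} := by
    ext x
    simpa [φ, sub_eq_zero] using eq_comm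
  have hmaps : Set.MapsTo φ {x | linearizedEval σ b (d + 1) x = 0}
      {y | linearizedEval σ (fun j ↦ ∑ i ∈ range (j + 1), b i) d y = 0} := by
    intro x hx
    simpa [φ, ← linearizedEval_succ_of_sum_eq_zero σ b d hb] using hx
  calc _ ≤ _ * (φ.ker : Set K).ncard :=
        φ.ncard_le_ncard_mul_ncard_ker hmaps (Set.toFinite _) (Set.toFinite _)
    _ ≤ _ := by rw [hker]; gcongr

theorem ncard_setOf_linearizedEval_eq_zero_le [Finite K] {q : ℕ}
    (hfix : {x | σ x = x}.ncard ≤ q) {a : ℕ → K} {d : ℕ} (ha : a d ≠ 0) :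
    {x | linearizedEval σ a d x = 0}.ncard ≤ q ^ d := by
  induction d generalizing a with
  | zero =>
    have : {x | linearizedEval σ a 0 x = 0} = {0} := by
      ext x
      simp [linearizedEval, ha]
    simp [this]
  | succ d ih =>
    by_cases hroot : ∃ v ≠ 0, linearizedEval σ a (d + 1) v = 0
    · obtain ⟨v, hv, hav⟩ := hroot
      set b : ℕ → K := fun i ↦ a i * (σ ^ i) v
      have hb : ∑ i ∈ range (d + 2), b i = 0 := by
        rwa [← linearizedEval_one, ← linearizedEval_mul, mul_one]
      have hc : ∑ i ∈ range (d + 1), b i ≠ 0 := by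
        rw [sum_range_succ] at hb
        rw [eq_neg_of_add_eq_zero_left hb, neg_ne_zero]
        exact mul_ne_zero ha (map_ne_zero _ |>.mpr hv)
      rw [← ncard_setOf_linearizedEval_mul_eq_zero σ a _ hv, pow_succ]
      exact (ncard_setOf_linearizedEval_succ_le σ hfix b d hb).trans
        (Nat.mul_le_mul_right q (ih hc))
    · push Not at hroot
      have hq : 1 ≤ q :=
        le_trans ((Set.ncard_pos (Set.toFinite {x | σ x = x})).mpr ⟨0, map_zero σ⟩) hfix
      calc _ ≤ ({0} : Set K).ncard :=
            Set.ncard_le_ncard (fun x hx ↦ by_contra fun h ↦ hroot x h hx) (Set.toFinite _)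
        _ ≤ q ^ (d + 1) := by simpa using Nat.one_le_pow _ _ hq

end Linearized

theorem pow_eq_self_of_pow_pow_eq_self {M₀ : Type*} [GroupWithZero M₀] {x : M₀} {p k n : ℕ}
    (hp : 0 < p) (hkn : k.Coprime n) (hk : x ^ p ^ k = x) (hn : x ^ p ^ n = x) : x ^ p = x := by
  rcases eq_or_ne x 0 with rfl | hx
  · exact zero_pow hp.ne'
  have pow_sub_one (e : ℕ) (he : x ^ p ^ e = x) : x ^ (p ^ e - 1) = 1 :=
    mul_right_cancel₀ hx <| by
      rw [← pow_succ, Nat.sub_add_cancel (Nat.one_le_pow _ _ hp), he, one_mul]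
  have h := pow_gcd_eq_one.mpr ⟨pow_sub_one k hk, pow_sub_one n hn⟩
  rw [Nat.pow_sub_one_gcd_pow_sub_one, hkn, pow_one] at h
  rw [← Nat.sub_add_cancel hp, pow_succ, h, one_mul]

theorem GaloisField.pow_char_pow_eq_self (p : ℕ) [Fact p.Prime] (n : ℕ) (x : GaloisField p n) :
    x ^ p ^ n = x := by
  rcases eq_or_ne n 0 with rfl | hn
  · simp
  have : Fintype (GaloisField p n) := Fintype.ofFinite _
  rw [← GaloisField.card p n hn, Nat.card_eq_fintype_card]
  exact FiniteField.pow_card x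

theorem GaloisField.ncard_fixedPoints_iterateFrobenius_le (p : ℕ) [Fact p.Prime] {n k : ℕ}
    (hkn : k.Coprime n) :
    {x : GaloisField p n | iterateFrobenius (GaloisField p n) p k x = x}.ncard ≤ p := by
  calc _ ≤ ((⊥ : Subfield (GaloisField p n)) : Set (GaloisField p n)).ncard :=
        Set.ncard_le_ncard (fun x hx ↦ (Subfield.mem_bot_iff_pow_eq_self _ p).mpr <|
          pow_eq_self_of_pow_pow_eq_self (Fact.out : p.Prime).pos hkn hx
            (pow_char_pow_eq_self p n x)) (Set.toFinite _)
    _ = p := by rw [← Nat.card_coe_set_eq]; exact Subfield.card_bot _ p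

theorem iterateFrobenius_pow_apply (R : Type*) [CommSemiring R] (p : ℕ) [ExpChar R p]
    (k i : ℕ) (x : R) : (iterateFrobenius R p k ^ i) x = x ^ p ^ (i * k) := by
  rw [RingHom.coe_pow, ← iterateFrobenius_mul_apply, iterateFrobenius_def, mul_comm]

theorem stmt2_general (m k d : ℕ) (hgcd : Nat.gcd k m = 1)
    (C : ℕ → GaloisField 2 m) (hCd : C d ≠ 0)
    (f : Polynomial (GaloisField 2 m))
    (hf : f = ∑ i ∈ Finset.range (d + 1), Polynomial.C (C i) * Polynomial.X ^ (2 ^ (i * k))) :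
    {x : GaloisField 2 m | f.eval x = 0}.ncard ≤ 2 ^ d := by
  let σ := iterateFrobenius (GaloisField 2 m) 2 k
  have hroots : {x | f.eval x = 0} = {x | linearizedEval σ C d x = 0} := by
    ext x
    simp [hf, Polynomial.eval_finsetSum, linearizedEval, σ, iterateFrobenius_pow_apply]
  rw [hroots]
  exact ncard_setOf_linearizedEval_eq_zero_le σ
    (GaloisField.ncard_fixedPoints_iterateFrobenius_le 2 hgcd) hCd

/-- A linearized polynomial
`f(X) = C₀X + C₁X^(2^k) + ⋯ + C_d X^(2^(dk))` over `𝔽_{2^m}` with `C_d ≠ 0` and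
`gcd(k,m)=1` has at most `2^d` roots in `𝔽_{2^m}`. -/
theorem stmt2 (m k d : ℕ) (hm : 0 < m) (hk : 0 < k) (hgcd : Nat.gcd k m = 1)
    (C : ℕ → GaloisField 2 m) (hCd : C d ≠ 0)
    (f : Polynomial (GaloisField 2 m))
    (hf : f = ∑ i ∈ Finset.range (d + 1), Polynomial.C (C i) * Polynomial.X ^ (2 ^ (i * k))) :
    {x : GaloisField 2 m | f.eval x = 0}.ncard ≤ 2 ^ d :=
  stmt2_general m k d hgcd C hCd f hf
end

section
/- Let $m$ be even and $k$ a positive integer with $\gcd(k,m)=1$ and $k < m/2$. Then for every nonzero $\alpha \in \mathbb{F}_{2^m}$, the number of affine points $(x,t) \in \mathbb{F}_{2^m}^2$ on the curve $X^3 = \alpha(T^{2^k} + T)$ is at least $2^{m/2}(2^{m/2} - 2(2^k - 1))$; in particular it is positive. -/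
/-!
Let `q = 2 ^ m`, let `ψ x = (-1) ^ Tr x` be the canonical additive character of `𝔽_q`
and `S γ = ∑ x, ψ (γ x³)` the cubic sums. Orthogonality counts the `N` points as
`q N = ∑ c, S c · ∑ t, ψ (c α (t ^ 2 ^ k + t))`. Since `ψ (y ^ 2) = ψ y`, the inner sum
equals `∑ t, ψ (((c α) ^ 2 ^ k + c α) t ^ 2 ^ k)`, which vanishes unless `c α` is fixed
by `x ↦ x ^ 2 ^ k`; as `gcd k m = 1` this means `c α ∈ {0, 1}`, so `N = q + S α⁻¹`.

For `m` even, `3 ∣ q - 1`. The sum `S` is constant on each coset of the cubes in `𝔽_qˣ`,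
and it takes the same value on the two nontrivial cosets because squaring swaps them and
`S (γ²) = S γ`. The moments `∑ γ, S γ = q` and `∑ γ, S γ ^ 2 = q (3 q - 2)` force these
values to be `-2 B, B, B` with `B ^ 2 = q`, so `N ≥ q - 2 √q`. Positivity is witnessed by
the point `(0, 0)`.
-/

open Finset Polynomial

theorem Subgroup.inv_mul_mem_or_of_index_eq_three {G : Type*} [CommGroup G] {H : Subgroup G}
    (hH : H.index = 3) {u v : G} (hu : u ∉ H) (hv : v ∉ H) :
    u⁻¹ * v ∈ H ∨ (u ^ 2)⁻¹ * v ∈ H := by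
  have : Finite (G ⧸ H) := Nat.finite_of_card_ne_zero (by rw [← Subgroup.index, hH]; norm_num)
  have := Fintype.ofFinite (G ⧸ H)
  classical
  set x : G ⧸ H := QuotientGroup.mk u
  have hx1 : x ≠ 1 := by rwa [Ne, QuotientGroup.eq_one_iff]
  have hx3 : x ^ 3 = 1 := hH ▸ pow_card_eq_one'
  have hx2 : x ^ 2 ≠ 1 := fun h ↦ hx1 <| by rw [← hx3, pow_succ, h, one_mul]
  have hxx2 : x ≠ x ^ 2 := fun h ↦ hx1 <| by rwa [sq, left_eq_mul] at h
  have huniv : ({1, x, x ^ 2} : Finset (G ⧸ H)) = univ := by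
    refine eq_univ_of_card _ ?_
    rw [card_insert_of_notMem (by simp [hx1.symm, hx2.symm]), card_pair hxx2,
      Fintype.card_eq_nat_card, ← Subgroup.index, hH]
  have hv' : (v : G ⧸ H) ∈ ({1, x, x ^ 2} : Finset (G ⧸ H)) := huniv ▸ mem_univ _
  simp only [mem_insert, mem_singleton, QuotientGroup.eq_one_iff, hv, false_or] at hv'
  rcases hv' with h | h
  · exact Or.inl (QuotientGroup.eq.mp h.symm)
  · exact Or.inr (QuotientGroup.eq.mp (by rw [QuotientGroup.mk_pow, h]))

theorem Subgroup.sum_ite_mem_of_index_eq_three {G R : Type*} [Group G] [Fintype G] [CommRing R]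
    {H : Subgroup G} [DecidablePred (· ∈ H)] (hH : H.index = 3) (a b : R) :
    ∑ g, (if g ∈ H then a else b) = Nat.card H * (a + 2 * b) := by
  have hH' : #{g | g ∈ H} = Nat.card H := by
    rw [Nat.card_eq_fintype_card, Fintype.card_subtype]
  have hHc : #{g | g ∉ H} = 2 * Nat.card H := by
    have := card_filter_add_card_filter_not (s := univ) (· ∈ H)
    have hG := H.card_mul_index
    rw [hH, Nat.card_eq_fintype_card (α := G)] at hG
    rw [card_univ] at this
    omega
  rw [sum_ite, sum_const, sum_const, hH', hHc, nsmul_eq_mul, nsmul_eq_mul]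
  push_cast
  ring

namespace CubicKummerCurve

theorem pow_two_pow_bijective {F : Type*} [Field F] [Finite F] [CharP F 2] (k : ℕ) :
    Function.Bijective fun x : F ↦ x ^ 2 ^ k :=
  Finite.injective_iff_bijective.mp fun x y h ↦ (iterateFrobenius F 2 k).injective <| by
    simpa only [iterateFrobenius_def] using h

theorem pow_two_pow_eq_self_iff {F : Type*} [Field F] [Fintype F] {m k : ℕ}
    (hF : Fintype.card F = 2 ^ m) (hkm : k.Coprime m) {d : F} :
    d ^ 2 ^ k = d ↔ d = 0 ∨ d = 1 := by
  refine ⟨fun hk ↦ ?_, ?_⟩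
  · have hperiodic (n : ℕ) : Function.IsPeriodicPt (· ^ 2) n d ↔ d ^ 2 ^ n = d := by
      rw [Function.IsPeriodicPt, Function.IsFixedPt, pow_iterate]
    have h1 := ((hperiodic k).mpr hk).gcd ((hperiodic m).mpr (hF ▸ FiniteField.pow_card d))
    rw [hkm, hperiodic, pow_one, sq] at h1
    exact IsIdempotentElem.iff_eq_zero_or_one.mp h1
  · rintro (rfl | rfl) <;> simp

theorem addChar_pow_two_pow {R M : Type*} [Semiring R] [Monoid M] {ψ : AddChar R M}
    (hψ2 : ∀ x, ψ (x ^ 2) = ψ x) (k : ℕ) (x : R) :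
    ψ (x ^ 2 ^ k) = ψ x := by
  induction k with
  | zero => rw [pow_zero, pow_one]
  | succ k ih => rw [pow_succ, pow_mul, hψ2, ih]

section Trace

variable {F : Type*} [Field F] {m : ℕ}

def trace (m : ℕ) (x : F) : F := ∑ i ∈ range m, x ^ 2 ^ i

/-- The trace is a polynomial of degree `2 ^ (m - 1) < #F`, so it cannot vanish identically. -/
theorem exists_trace_ne_zero [Fintype F] (hF : Fintype.card F = 2 ^ m) (hm : m ≠ 0) :
    ∃ x : F, trace m x ≠ 0 := by
  by_contra! h
  let p : F[X] := ∑ i ∈ range m, X ^ 2 ^ i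
  have hdeg : p.natDegree < Fintype.card F := by
    refine (natDegree_sum_le_of_forall_le _ _ fun i hi ↦ ?_).trans_lt
      (hF ▸ Nat.pow_lt_pow_right one_lt_two (Nat.sub_one_lt hm))
    rw [natDegree_X_pow]
    exact Nat.pow_le_pow_right two_pos (Nat.le_sub_one_of_lt (mem_range.mp hi))
  have hp : p = 0 := eq_zero_of_natDegree_lt_card_of_eval_eq_zero p Function.injective_id
    (fun x ↦ by simpa [p, eval_finsetSum, trace] using h x) hdeg
  have hcoeff : p.coeff (2 ^ (m - 1)) = 1 := by
    simp only [p, finsetSum_coeff, coeff_X_pow, (Nat.pow_right_injective le_rfl).eq_iff,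
      sum_ite_eq, mem_range]
    simp [Nat.sub_one_lt hm]
  simp [hp] at hcoeff

theorem trace_pow_two [Fintype F] (hF : Fintype.card F = 2 ^ m) (x : F) :
    trace m (x ^ 2) = trace m x := by
  have h := (sum_range_succ' (fun i ↦ x ^ 2 ^ i) m).symm.trans (sum_range_succ _ m)
  rw [pow_zero, pow_one, ← hF, FiniteField.pow_card] at h
  simp only [trace, ← pow_mul, ← pow_succ']
  exact add_right_cancel h

variable [CharP F 2]

theorem trace_add (x y : F) : trace m (x + y) = trace m x + trace m y := by
  simp only [trace, ← sum_add_distrib, add_pow_char_pow]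

theorem trace_sq (x : F) : trace m x ^ 2 = trace m (x ^ 2) := by
  simp only [trace, sum_pow_char, pow_right_comm]

variable [Fintype F]

theorem trace_eq_zero_or_eq_one (hF : Fintype.card F = 2 ^ m) (x : F) :
    trace m x = 0 ∨ trace m x = 1 :=
  IsIdempotentElem.iff_eq_zero_or_one.mp <| (sq _).symm.trans <|
    (trace_sq x).trans (trace_pow_two hF x)

variable [DecidableEq F]

def traceChar (hF : Fintype.card F = 2 ^ m) : AddChar F ℤ where
  toFun x := if trace m x = 0 then 1 else -1
  map_zero_eq_one' := by simp [trace]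
  map_add_eq_mul' x y := by
    rcases trace_eq_zero_or_eq_one hF x with hx | hx <;>
      rcases trace_eq_zero_or_eq_one hF y with hy | hy <;>
      simp [trace_add, hx, hy, CharTwo.add_self_eq_zero]

theorem traceChar_pow_two (hF : Fintype.card F = 2 ^ m) (x : F) :
    traceChar hF (x ^ 2) = traceChar hF x := by
  simp [traceChar, trace_pow_two hF]

theorem traceChar_isPrimitive (hF : Fintype.card F = 2 ^ m) (hm : m ≠ 0) :
    (traceChar hF).IsPrimitive := by
  obtain ⟨e, he⟩ := exists_trace_ne_zero hF hm
  intro a ha h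
  have := DFunLike.congr_fun h (a⁻¹ * e)
  simp [traceChar, AddChar.mulShift_apply, mul_inv_cancel_left₀ ha, he] at this

end Trace

section Orthogonality

variable {F : Type*} [Field F] [Fintype F] [DecidableEq F] {ψ : AddChar F ℤ}

theorem card_mul_card_filter_eq_zero (hψ : ψ.IsPrimitive) {ι : Type*} [Fintype ι]
    (f : ι → F) :
    (Fintype.card F : ℤ) * #{i | f i = 0} = ∑ c, ∑ i, ψ (c * f i) := by
  rw [sum_comm]
  simp only [AddChar.sum_mulShift _ hψ, Nat.cast_ite, Nat.cast_zero, ← sum_filter, sum_const,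
    nsmul_eq_mul, mul_comm]

variable [CharP F 2]

theorem sum_addChar_mul_pow_two_pow_add (hψ : ψ.IsPrimitive) (hψ2 : ∀ x, ψ (x ^ 2) = ψ x)
    (k : ℕ) (d : F) :
    ∑ t, ψ (d * (t ^ 2 ^ k + t)) = if d ^ 2 ^ k = d then (Fintype.card F : ℤ) else 0 := by
  calc ∑ t, ψ (d * (t ^ 2 ^ k + t)) = ∑ t, ψ (t ^ 2 ^ k * (d ^ 2 ^ k + d)) := by
        refine sum_congr rfl fun t _ ↦ ?_
        rw [mul_add, AddChar.map_add_eq_mul, ← addChar_pow_two_pow hψ2 k (d * t),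
          ← AddChar.map_add_eq_mul]
        ring_nf
    _ = ∑ s, ψ (s * (d ^ 2 ^ k + d)) :=
        Fintype.sum_bijective _ (pow_two_pow_bijective k) _ _ fun _ ↦ rfl
    _ = _ := by
        simp only [AddChar.sum_mulShift _ hψ, CharTwo.add_eq_zero, Nat.cast_ite, Nat.cast_zero]

end Orthogonality

section CubicSum

variable {F : Type*} [Field F] [Fintype F] {ψ : AddChar F ℤ}

def cubicSum (ψ : AddChar F ℤ) (γ : F) : ℤ := ∑ x, ψ (γ * x ^ 3)

theorem cubicSum_zero : cubicSum ψ 0 = Fintype.card F := by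
  simp [cubicSum]

theorem cubicSum_mul_cube (γ : F) {c : F} (hc : c ≠ 0) :
    cubicSum ψ (γ * c ^ 3) = cubicSum ψ γ :=
  Fintype.sum_bijective _ (mulLeft_bijective₀ c hc) _ _ fun x ↦ by rw [mul_assoc, ← mul_pow]

theorem cubicSum_eq_of_mem_range {u : Fˣ} (hu : u ∈ (powMonoidHom 3 : Fˣ →* Fˣ).range) :
    cubicSum ψ u = cubicSum ψ 1 := by
  obtain ⟨c, rfl⟩ := hu
  simpa using cubicSum_mul_cube (ψ := ψ) 1 c.ne_zero

theorem exists_isPrimitiveRoot_three (h3 : 3 ∣ Fintype.card F - 1) :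
    ∃ ζ : F, IsPrimitiveRoot ζ 3 := by
  classical
  obtain ⟨ζ, hζ⟩ := exists_prime_orderOf_dvd_card 3 (Fintype.card_units (α := F) ▸ h3)
  refine ⟨ζ, IsPrimitiveRoot.coe_units_iff.mpr ?_⟩
  rw [← hζ]
  exact IsPrimitiveRoot.orderOf ζ

theorem index_range_powMonoidHom_three (h3 : 3 ∣ Fintype.card F - 1) :
    (powMonoidHom 3 : Fˣ →* Fˣ).range.index = 3 := by
  rw [IsCyclic.index_powMonoidHom_range, Nat.card_units, Nat.card_eq_fintype_card,
    Nat.gcd_eq_right h3]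

theorem cubicSum_pow_two [CharP F 2] (hψ2 : ∀ x, ψ (x ^ 2) = ψ x) (γ : F) :
    cubicSum ψ (γ ^ 2) = cubicSum ψ γ := by
  refine (Fintype.sum_bijective _ (by simpa using pow_two_pow_bijective (F := F) 1) _ _
    fun y ↦ ?_).symm
  rw [← hψ2]
  ring_nf

theorem cubicSum_eq_of_notMem_range [CharP F 2] (hψ2 : ∀ x, ψ (x ^ 2) = ψ x)
    (h3 : 3 ∣ Fintype.card F - 1) {u v : Fˣ} (hu : u ∉ (powMonoidHom 3 : Fˣ →* Fˣ).range)
    (hv : v ∉ (powMonoidHom 3 : Fˣ →* Fˣ).range) : cubicSum ψ u = cubicSum ψ v := by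
  have hC := index_range_powMonoidHom_three (F := F) h3
  rcases Subgroup.inv_mul_mem_or_of_index_eq_three hC hu hv with ⟨c, hc⟩ | ⟨c, hc⟩
  · rw [inv_mul_eq_iff_eq_mul.mp hc.symm, powMonoidHom_apply, Units.val_mul,
      Units.val_pow_eq_pow_val, cubicSum_mul_cube _ c.ne_zero]
  · rw [inv_mul_eq_iff_eq_mul.mp hc.symm, powMonoidHom_apply, Units.val_mul,
      Units.val_pow_eq_pow_val, Units.val_pow_eq_pow_val, cubicSum_mul_cube _ c.ne_zero,
      cubicSum_pow_two hψ2]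

variable [DecidableEq F]

theorem sum_cubicSum (hψ : ψ.IsPrimitive) : ∑ γ, cubicSum ψ γ = Fintype.card F := by
  have h := card_mul_card_filter_eq_zero hψ fun x : F ↦ x ^ 3
  simp only [pow_eq_zero_iff three_ne_zero, filter_eq', mem_univ, if_true, card_singleton,
    Nat.cast_one, mul_one] at h
  exact h.symm

theorem card_filter_pow_three_eq (h3 : 3 ∣ Fintype.card F - 1) {x : F} (hx : x ≠ 0) :
    #{y | y ^ 3 = x ^ 3} = 3 := by
  obtain ⟨ζ, hζ⟩ := exists_isPrimitiveRoot_three h3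
  have : ({y | y ^ 3 = x ^ 3} : Finset F) = (nthRoots 3 (x ^ 3)).toFinset := by
    ext y
    simp [mem_nthRoots three_pos]
  rw [this, Multiset.toFinset_card_of_nodup (hζ.nthRoots_nodup (pow_ne_zero 3 hx)),
    hζ.card_nthRoots, if_pos ⟨x, rfl⟩]

theorem card_pow_three_eq_pow_three (h3 : 3 ∣ Fintype.card F - 1) :
    (#{p : F × F | p.1 ^ 3 = p.2 ^ 3} : ℤ) = 3 * Fintype.card F - 2 := by
  have hfiber (x : F) : (#{y | x ^ 3 = y ^ 3} : ℤ) = if x = 0 then 1 else 3 := by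
    simp_rw [eq_comm (a := x ^ 3)]
    split_ifs with hx
    · simp [hx, pow_eq_zero_iff three_ne_zero, filter_eq']
    · rw [card_filter_pow_three_eq h3 hx, Nat.cast_ofNat]
  rw [card_filter, Fintype.sum_prod_type]
  simp_rw [← card_filter]
  push_cast
  simp only [hfiber, sum_ite, filter_eq', filter_ne', mem_univ, if_true, sum_const,
    card_singleton, card_erase_of_mem, card_univ, nsmul_eq_mul]
  rw [Nat.cast_sub Fintype.card_pos]
  ring

theorem sum_eq_add_sum_units {M : Type*} [AddCommMonoid M] (f : F → M) :
    ∑ x, f x = f 0 + ∑ u : Fˣ, f u := by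
  rw [Fintype.sum_eq_add_sum_subtype_ne f 0, ← unitsEquivNeZero.sum_comp]
  rfl

theorem sum_units_cubicSum (hψ : ψ.IsPrimitive) : ∑ u : Fˣ, cubicSum ψ u = 0 := by
  have h := sum_cubicSum hψ
  rw [sum_eq_add_sum_units, cubicSum_zero] at h
  linarith

variable [CharP F 2]

theorem sum_cubicSum_sq (hψ : ψ.IsPrimitive) :
    ∑ γ, cubicSum ψ γ ^ 2 = Fintype.card F * #{p : F × F | p.1 ^ 3 = p.2 ^ 3} := by
  have h := card_mul_card_filter_eq_zero hψ fun p : F × F ↦ p.1 ^ 3 + p.2 ^ 3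
  simp only [CharTwo.add_eq_zero] at h
  rw [h]
  refine sum_congr rfl fun γ _ ↦ ?_
  rw [sq, cubicSum, sum_mul_sum, ← Fintype.sum_prod_type']
  simp only [mul_add, AddChar.map_add_eq_mul]

theorem sum_units_cubicSum_sq (hψ : ψ.IsPrimitive) (h3 : 3 ∣ Fintype.card F - 1) :
    ∑ u : Fˣ, cubicSum ψ u ^ 2 = 2 * Fintype.card F * (Fintype.card F - 1) := by
  have h := sum_cubicSum_sq hψ
  rw [sum_eq_add_sum_units, cubicSum_zero, card_pow_three_eq_pow_three h3] at h
  linear_combination h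

/-- The cubic sums over the three cosets of the cubes in `Fˣ` take values `-2B, B, B` with
`B ^ 2 = #F`, as forced by the first two moments. -/
theorem cubicSum_sq_le (hψ : ψ.IsPrimitive) (hψ2 : ∀ x, ψ (x ^ 2) = ψ x)
    (h3 : 3 ∣ Fintype.card F - 1) {β : F} (hβ : β ≠ 0) :
    cubicSum ψ β ^ 2 ≤ 4 * Fintype.card F := by
  classical
  set C := (powMonoidHom 3 : Fˣ →* Fˣ).range
  have hC : C.index = 3 := index_range_powMonoidHom_three h3
  obtain ⟨g, hg⟩ : ∃ g, g ∉ C := by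
    by_contra! h
    have := C.index_eq_one.mpr (C.eq_top_iff'.mpr h)
    omega
  set A := cubicSum ψ 1
  set B := cubicSum ψ g
  have hval (u : Fˣ) : cubicSum ψ u = if u ∈ C then A else B := by
    split_ifs with hu
    · exact cubicSum_eq_of_mem_range hu
    · exact cubicSum_eq_of_notMem_range hψ2 h3 hu hg
  have hsum (f : ℤ → ℤ) : ∑ u : Fˣ, f (cubicSum ψ u) = Nat.card C * (f A + 2 * f B) := by
    simp_rw [hval, apply_ite f]
    exact C.sum_ite_mem_of_index_eq_three hC _ _
  have h1 : (Nat.card C : ℤ) * (A + 2 * B) = 0 := (hsum id).symm.trans (sum_units_cubicSum hψ)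
  have h2 : (Nat.card C : ℤ) * (A ^ 2 + 2 * B ^ 2) = 2 * Fintype.card F * (Fintype.card F - 1) :=
    (hsum (· ^ 2)).symm.trans (sum_units_cubicSum_sq hψ h3)
  have hq : Nat.card C * 3 = Fintype.card F - 1 := by
    rw [← hC, C.card_mul_index, Nat.card_units, Nat.card_eq_fintype_card]
  zify [Fintype.card_pos (α := F)] at hq
  have hn : (Nat.card C : ℤ) ≠ 0 := Nat.cast_ne_zero.mpr Nat.card_pos.ne'
  have hA : A = -2 * B := by
    linear_combination (mul_eq_zero.mp h1).resolve_left hn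
  have hB : B ^ 2 = Fintype.card F := by
    rw [hA] at h2
    have : (Nat.card C : ℤ) * (6 * (B ^ 2 - Fintype.card F)) = 0 := by
      linear_combination h2 - 2 * (Fintype.card F : ℤ) * hq
    linarith [(mul_eq_zero.mp this).resolve_left hn]
  have hβB := hval (Units.mk0 β hβ)
  rw [Units.val_mk0] at hβB
  split_ifs at hβB
  · rw [hβB, hA]
    nlinarith
  · rw [hβB, hB]
    linarith [Int.natCast_nonneg (Fintype.card F)]

end CubicSum

section Curve

variable {F : Type*} [Field F] [Fintype F] [DecidableEq F] [CharP F 2] {ψ : AddChar F ℤ}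

theorem card_curve_points (hψ : ψ.IsPrimitive) (hψ2 : ∀ x, ψ (x ^ 2) = ψ x) {m k : ℕ}
    (hF : Fintype.card F = 2 ^ m) (hkm : k.Coprime m) {α : F} (hα : α ≠ 0) :
    (#{p : F × F | p.1 ^ 3 = α * (p.2 ^ 2 ^ k + p.2)} : ℤ) =
      Fintype.card F + cubicSum ψ α⁻¹ := by
  have hq : (Fintype.card F : ℤ) ≠ 0 := Nat.cast_ne_zero.mpr Fintype.card_ne_zero
  have hfixed (c : F) : (c * α) ^ 2 ^ k = c * α ↔ c ∈ ({0, α⁻¹} : Finset F) := by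
    rw [pow_two_pow_eq_self_iff hF hkm, mul_eq_zero, or_iff_left hα, mul_eq_one_iff_eq_inv₀ hα,
      mem_insert, mem_singleton]
  have hcount :=
    card_mul_card_filter_eq_zero hψ fun p : F × F ↦ p.1 ^ 3 + α * (p.2 ^ 2 ^ k + p.2)
  simp only [CharTwo.add_eq_zero] at hcount
  refine mul_left_cancel₀ hq ?_
  calc (Fintype.card F : ℤ) * #{p : F × F | p.1 ^ 3 = α * (p.2 ^ 2 ^ k + p.2)}
      = ∑ c, cubicSum ψ c * ∑ t, ψ (c * α * (t ^ 2 ^ k + t)) := by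
        rw [hcount]
        refine sum_congr rfl fun c _ ↦ ?_
        rw [cubicSum, sum_mul_sum, ← Fintype.sum_prod_type']
        simp only [mul_add, AddChar.map_add_eq_mul, mul_assoc]
    _ = ∑ c, if c ∈ ({0, α⁻¹} : Finset F) then cubicSum ψ c * Fintype.card F else 0 := by
        simp_rw [sum_addChar_mul_pow_two_pow_add hψ hψ2, hfixed, mul_ite, mul_zero]
    _ = Fintype.card F * (Fintype.card F + cubicSum ψ α⁻¹) := by
        rw [sum_ite_mem, univ_inter, sum_pair (inv_ne_zero hα).symm, cubicSum_zero]
        ring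

theorem le_card_curve_points {m k : ℕ} (hF : Fintype.card F = 2 ^ m) (hm : Even m) (hm0 : m ≠ 0)
    (hkm : k.Coprime m) {α : F} (hα : α ≠ 0) :
    (2 : ℤ) ^ m - 2 * 2 ^ (m / 2) ≤ #{p : F × F | p.1 ^ 3 = α * (p.2 ^ 2 ^ k + p.2)} := by
  obtain ⟨r, rfl⟩ := hm
  have h3 : 3 ∣ Fintype.card F - 1 := by
    simpa [hF, ← two_mul, pow_mul] using Nat.sub_dvd_pow_sub_pow 4 1 r
  have hψ := traceChar_isPrimitive hF hm0
  have hS := cubicSum_sq_le hψ (traceChar_pow_two hF) h3 (inv_ne_zero hα)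
  have hq : (2 : ℤ) ^ (r + r) = (2 ^ r) ^ 2 := by ring
  have hS' : cubicSum (traceChar hF) α⁻¹ ^ 2 ≤ (2 * 2 ^ r) ^ 2 := by
    rw [hF] at hS
    push_cast at hS
    linarith
  rw [card_curve_points hψ (traceChar_pow_two hF) hF hkm hα, hF, show (r + r) / 2 = r by omega]
  push_cast
  linarith [(abs_le_of_sq_le_sq' hS' (by positivity)).1]

end Curve

end CubicKummerCurve

open CubicKummerCurve

theorem stmt6_general (m k : ℕ) (hm : Even m) (hm0 : 0 < m) (hk : 0 < k)
    (hgcd : Nat.gcd k m = 1)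
    (α : GaloisField 2 m) (hα : α ≠ 0) :
    2 ^ (m / 2) * (2 ^ (m / 2) - 2 * (2 ^ k - 1)) ≤
      {p : GaloisField 2 m × GaloisField 2 m |
        p.1 ^ 3 = α * (p.2 ^ (2 ^ k) + p.2)}.ncard ∧
    0 < {p : GaloisField 2 m × GaloisField 2 m |
        p.1 ^ 3 = α * (p.2 ^ (2 ^ k) + p.2)}.ncard := by
  classical
  let _ : Fintype (GaloisField 2 m) := Fintype.ofFinite _
  have hF : Fintype.card (GaloisField 2 m) = 2 ^ m :=
    Nat.card_eq_fintype_card.symm.trans (GaloisField.card 2 m hm0.ne')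
  have hN := le_card_curve_points hF hm hm0.ne' (Nat.coprime_iff_gcd_eq_one.mpr hgcd) hα
  rw [Set.ncard_eq_toFinset_card', Set.toFinset_ofPred]
  refine ⟨?_, card_pos.mpr ⟨0, by simp⟩⟩
  obtain ⟨r, rfl⟩ := hm
  rw [show (r + r) / 2 = r by omega] at hN ⊢
  rw [pow_add] at hN
  have hs : 2 ≤ 2 ^ r := Nat.le_self_pow (by omega) 2
  have hk2 : 2 ≤ 2 * (2 ^ k - 1) := by have := Nat.one_lt_two_pow hk.ne'; omega
  calc 2 ^ r * (2 ^ r - 2 * (2 ^ k - 1)) ≤ 2 ^ r * (2 ^ r - 2) :=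
        Nat.mul_le_mul_left _ (Nat.sub_le_sub_left hk2 _)
    _ ≤ _ := by
        zify [hs]
        linarith

/-- For `m` even, `gcd(k,m)=1`, `k < m/2` and nonzero `α ∈ 𝔽_{2^m}`, the
number of affine points `(x,t) ∈ 𝔽_{2^m}²` on the curve `X³ = α(T^(2^k) + T)` is at
least `2^(m/2)(2^(m/2) - 2(2^k - 1))`, and in particular is positive. -/
theorem stmt6 (m k : ℕ) (hm : Even m) (hm0 : 0 < m) (hk : 0 < k)
    (hgcd : Nat.gcd k m = 1) (hkm : 2 * k < m)
    (α : GaloisField 2 m) (hα : α ≠ 0) :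
    2 ^ (m / 2) * (2 ^ (m / 2) - 2 * (2 ^ k - 1)) ≤
      {p : GaloisField 2 m × GaloisField 2 m |
        p.1 ^ 3 = α * (p.2 ^ (2 ^ k) + p.2)}.ncard ∧
    0 < {p : GaloisField 2 m × GaloisField 2 m |
        p.1 ^ 3 = α * (p.2 ^ (2 ^ k) + p.2)}.ncard :=
  stmt6_general m k hm hm0 hk hgcd α hα
end

section
/- Let $m$ be even and $k$ coprime to $m$. Then $\gcd(2^k+1, 2^m-1) = 3$, and consequently the map $a \mapsto a^{2^k+1}$ on $\mathbb{F}_{2^m}^*$ has image exactly the subgroup of cubes $\{x^3 : x \in \mathbb{F}_{2^m}^*\}$. -/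
/-!
A common divisor of `2^k + 1` and `2^m - 1` divides `2^(2k) - 1`, hence
`2^gcd(2k, m) - 1 = 2^2 - 1 = 3`; conversely `3` divides both because `k` is odd and `m` even.
In a group whose exponent divides `N`, Bézout shows that the `e`-th powers are exactly the
`gcd(e, N)`-th powers; apply this to `𝔽_{2^m}ˣ`, of order `2^m - 1`, with `e = 2^k + 1`.
-/

theorem Nat.pow_add_one_gcd_pow_sub_one_dvd (a k m : ℕ) :
    Nat.gcd (a ^ k + 1) (a ^ m - 1) ∣ a ^ Nat.gcd (2 * k) m - 1 := by
  have hdvd : a ^ k + 1 ∣ a ^ (2 * k) - 1 :=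
    ⟨a ^ k - 1, by rw [mul_comm, pow_mul, ← one_pow 2, Nat.sq_sub_sq, one_pow]⟩
  rw [← Nat.pow_sub_one_gcd_pow_sub_one]
  exact Nat.gcd_dvd_gcd_of_dvd_left _ hdvd

theorem Nat.two_pow_add_one_gcd_two_pow_sub_one {k m : ℕ} (hm : Even m)
    (hkm : Nat.Coprime k m) : Nat.gcd (2 ^ k + 1) (2 ^ m - 1) = 3 := by
  have hk : Odd k := by
    rw [← Nat.not_even_iff_odd]
    intro hk
    exact Nat.not_coprime_of_dvd_of_dvd one_lt_two hk.two_dvd hm.two_dvd hkm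
  have h3k : 3 ∣ 2 ^ k + 1 := by simpa using hk.nat_add_dvd_pow_add_pow 2 1
  have h3m : 3 ∣ 2 ^ m - 1 := Nat.pow_sub_one_dvd_pow_sub_one 2 hm.two_dvd
  have hgcd : Nat.gcd (2 * k) m = 2 := by
    rw [hkm.gcd_mul_right_cancel, Nat.gcd_eq_left hm.two_dvd]
  refine Nat.dvd_antisymm ?_ (Nat.dvd_gcd h3k h3m)
  simpa [hgcd] using Nat.pow_add_one_gcd_pow_sub_one_dvd 2 k m

theorem Set.range_pow_eq_range_pow_gcd {G : Type*} [Group G] {N : ℕ}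
    (hN : ∀ g : G, g ^ N = 1) (e : ℕ) :
    Set.range (fun g : G => g ^ e) = Set.range (fun g : G => g ^ Nat.gcd e N) := by
  apply Set.Subset.antisymm
  · rintro _ ⟨g, rfl⟩
    obtain ⟨t, ht⟩ := Nat.gcd_dvd_left e N
    exact ⟨g ^ t, show (g ^ t) ^ _ = g ^ e by rw [← pow_mul, mul_comm, ← ht]⟩
  · rintro _ ⟨g, rfl⟩
    refine ⟨g ^ Nat.gcdA e N, ?_⟩
    show (g ^ Nat.gcdA e N) ^ e = g ^ Nat.gcd e N
    rw [← zpow_natCast g, Nat.gcd_eq_gcd_ab, zpow_add, mul_comm (e : ℤ), zpow_mul, zpow_mul,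
      zpow_natCast, zpow_natCast, hN, one_zpow, mul_one]

theorem setOf_exists_ne_zero_eq_pow {M₀ : Type*} [GroupWithZero M₀] (n : ℕ) :
    {x : M₀ | ∃ a, a ≠ 0 ∧ x = a ^ n} = Units.val '' Set.range (fun u : M₀ˣ => u ^ n) := by
  ext x
  constructor
  · rintro ⟨a, ha, rfl⟩
    exact ⟨Units.mk0 a ha ^ n, ⟨_, rfl⟩, by simp⟩
  · rintro ⟨_, ⟨u, rfl⟩, rfl⟩
    exact ⟨u, u.ne_zero, by simp⟩

theorem stmt9_general (m k : ℕ) (hm : Even m) (hm0 : 0 < m)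
    (hgcd : Nat.gcd k m = 1) :
    Nat.gcd (2 ^ k + 1) (2 ^ m - 1) = 3 ∧
    {x : GaloisField 2 m | ∃ a : GaloisField 2 m, a ≠ 0 ∧ x = a ^ (2 ^ k + 1)} =
      {x : GaloisField 2 m | ∃ y : GaloisField 2 m, y ≠ 0 ∧ x = y ^ 3} := by
  have hG := Nat.two_pow_add_one_gcd_two_pow_sub_one hm hgcd
  have hN (u : (GaloisField 2 m)ˣ) : u ^ (2 ^ m - 1) = 1 := by
    rw [← GaloisField.card 2 m hm0.ne', ← Nat.card_units]
    exact pow_card_eq_one'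
  refine ⟨hG, ?_⟩
  rw [setOf_exists_ne_zero_eq_pow, setOf_exists_ne_zero_eq_pow,
    Set.range_pow_eq_range_pow_gcd hN, hG]

/-- For `m` even and `gcd(k,m)=1`, we have `gcd(2^k+1, 2^m-1) = 3`, and the
image of the map `a ↦ a^(2^k+1)` on nonzero elements of `𝔽_{2^m}` is exactly the set of
nonzero cubes. -/
theorem stmt9 (m k : ℕ) (hm : Even m) (hm0 : 0 < m) (hk : 0 < k)
    (hgcd : Nat.gcd k m = 1) :
    Nat.gcd (2 ^ k + 1) (2 ^ m - 1) = 3 ∧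
    {x : GaloisField 2 m | ∃ a : GaloisField 2 m, a ≠ 0 ∧ x = a ^ (2 ^ k + 1)} =
      {x : GaloisField 2 m | ∃ y : GaloisField 2 m, y ≠ 0 ∧ x = y ^ 3} :=
  stmt9_general m k hm hm0 hgcd
end

section
/- Let $m, k$ be positive integers with $\gcd(k,m)=1$, let $\alpha, \beta \in \mathbb{F}_{2^m}$ with $\beta \neq 0$, and let $a, b \in \mathbb{F}_{2^m}$ with $ab \neq 0$. Then the linear map $T_{a,b}(Y) = a^{2^{3k}+2^{2k}} Y^{2^{2k}} + \alpha a^{2^{2k}} b^{2^k} Y^{2^k} + \beta b^{2^k+1} Y$ has trivial kernel on $\mathbb{F}_{2^m}$ if and only if the polynomial $X^{2^k+1} + \alpha X + \beta$ has no root of the form $X = (a^{2^{2k}}/b^{2^k}) z^{2^k - 1}$ with $z \in \mathbb{F}_{2^m}^*$; in particular, if $X^{2^k+1} + \alpha X + \beta$ has no root in $\mathbb{F}_{2^m}$, then $T_{a,b}$ has trivial kernel for all $a, b$ with $ab \neq 0$. -/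
/-! With `q = 2^k` and `X = (a^(q²)/b^q)·(bY)^(q-1)`, a direct computation gives
`T(Y) = b^(q+1) · Y · (X^(q+1) + αX + β)`. Since `Y ↦ bY` permutes the nonzero
elements, `T` has a nonzero zero exactly when the polynomial has a root of the stated form. -/

section LinearizedFactor

variable {F : Type*} [Field F] {q : ℕ} {α β a b : F}

theorem linearized_eq_mul (hq : 0 < q) (hb : b ≠ 0) (Y : F) :
    a ^ (q ^ 3 + q ^ 2) * Y ^ q ^ 2 + α * a ^ q ^ 2 * b ^ q * Y ^ q + β * b ^ (q + 1) * Y =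
      b ^ (q + 1) * Y * ((a ^ q ^ 2 / b ^ q * (b * Y) ^ (q - 1)) ^ (q + 1) +
        α * (a ^ q ^ 2 / b ^ q * (b * Y) ^ (q - 1)) + β) := by
  obtain ⟨n, rfl⟩ : ∃ n, q = n + 1 := ⟨q - 1, by omega⟩
  have hX : a ^ (n + 1) ^ 2 / b ^ (n + 1) * (b * Y) ^ n = a ^ (n + 1) ^ 2 * Y ^ n / b := by
    field_simp
    ring
  rw [Nat.add_sub_cancel, hX, div_pow, mul_pow]
  field_simp
  ring

theorem linearized_eq_zero_iff (hq : 0 < q) (hb : b ≠ 0) {Y : F} (hY : Y ≠ 0) :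
    a ^ (q ^ 3 + q ^ 2) * Y ^ q ^ 2 + α * a ^ q ^ 2 * b ^ q * Y ^ q + β * b ^ (q + 1) * Y = 0 ↔
      (a ^ q ^ 2 / b ^ q * (b * Y) ^ (q - 1)) ^ (q + 1) +
        α * (a ^ q ^ 2 / b ^ q * (b * Y) ^ (q - 1)) + β = 0 := by
  rw [linearized_eq_mul hq hb Y, mul_eq_zero,
    or_iff_right (mul_ne_zero (pow_ne_zero _ hb) hY)]

theorem linearized_ker_trivial_iff (hq : 0 < q) (hb : b ≠ 0) :
    (∀ Y : F, a ^ (q ^ 3 + q ^ 2) * Y ^ q ^ 2 + α * a ^ q ^ 2 * b ^ q * Y ^ q +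
        β * b ^ (q + 1) * Y = 0 → Y = 0) ↔
      ¬∃ z : F, z ≠ 0 ∧ (a ^ q ^ 2 / b ^ q * z ^ (q - 1)) ^ (q + 1) +
        α * (a ^ q ^ 2 / b ^ q * z ^ (q - 1)) + β = 0 := by
  constructor
  · rintro hker ⟨z, hz, hroot⟩
    have hzb : z / b ≠ 0 := div_ne_zero hz hb
    rw [← mul_div_cancel₀ z hb, ← linearized_eq_zero_iff hq hb hzb] at hroot
    exact hzb (hker _ hroot)
  · intro hnoroot Y hTY
    by_contra hY
    exact hnoroot ⟨b * Y, mul_ne_zero hb hY, (linearized_eq_zero_iff hq hb hY).1 hTY⟩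

end LinearizedFactor

theorem stmt13_general (m k : ℕ)
    (α β : GaloisField 2 m)
    (a b : GaloisField 2 m) (hab : a * b ≠ 0)
    (T : GaloisField 2 m → GaloisField 2 m)
    (hT : ∀ Y, T Y = a ^ (2 ^ (3 * k) + 2 ^ (2 * k)) * Y ^ (2 ^ (2 * k)) +
      α * a ^ (2 ^ (2 * k)) * b ^ (2 ^ k) * Y ^ (2 ^ k) + β * b ^ (2 ^ k + 1) * Y) :
    ((∀ Y : GaloisField 2 m, T Y = 0 → Y = 0) ↔
      ¬∃ z : GaloisField 2 m, z ≠ 0 ∧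
        (a ^ (2 ^ (2 * k)) / b ^ (2 ^ k) * z ^ (2 ^ k - 1)) ^ (2 ^ k + 1) +
          α * (a ^ (2 ^ (2 * k)) / b ^ (2 ^ k) * z ^ (2 ^ k - 1)) + β = 0) ∧
    ((∀ X : GaloisField 2 m, X ^ (2 ^ k + 1) + α * X + β ≠ 0) →
      ∀ Y : GaloisField 2 m, T Y = 0 → Y = 0) := by
  have hpow (j : ℕ) : 2 ^ (j * k) = (2 ^ k) ^ j := by rw [mul_comm, pow_mul]
  simp only [hpow] at hT ⊢
  have hker := linearized_ker_trivial_iff (α := α) (β := β) (a := a)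
    (Nat.two_pow_pos k) (right_ne_zero_of_mul hab)
  simp only [← hT] at hker
  refine ⟨hker, fun hnoroot => hker.2 ?_⟩
  rintro ⟨z, -, hroot⟩
  exact hnoroot _ hroot

/-- For `gcd(k,m)=1`, `β ≠ 0` and `ab ≠ 0`, the linearized map
`T_{a,b}(Y) = a^(2^(3k)+2^(2k)) Y^(2^(2k)) + α a^(2^(2k)) b^(2^k) Y^(2^k) + β b^(2^k+1) Y`
has trivial kernel on `𝔽_{2^m}` iff `X^(2^k+1) + αX + β` has no root of the form
`X = (a^(2^(2k))/b^(2^k))·z^(2^k-1)` with `z ≠ 0`; in particular if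
`X^(2^k+1) + αX + β` has no root at all in `𝔽_{2^m}` then `T_{a,b}` has trivial kernel. -/
theorem stmt13 (m k : ℕ) (hm : 0 < m) (hk : 0 < k) (hgcd : Nat.gcd k m = 1)
    (α β : GaloisField 2 m) (hβ : β ≠ 0)
    (a b : GaloisField 2 m) (hab : a * b ≠ 0)
    (T : GaloisField 2 m → GaloisField 2 m)
    (hT : ∀ Y, T Y = a ^ (2 ^ (3 * k) + 2 ^ (2 * k)) * Y ^ (2 ^ (2 * k)) +
      α * a ^ (2 ^ (2 * k)) * b ^ (2 ^ k) * Y ^ (2 ^ k) + β * b ^ (2 ^ k + 1) * Y) :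
    ((∀ Y : GaloisField 2 m, T Y = 0 → Y = 0) ↔
      ¬∃ z : GaloisField 2 m, z ≠ 0 ∧
        (a ^ (2 ^ (2 * k)) / b ^ (2 ^ k) * z ^ (2 ^ k - 1)) ^ (2 ^ k + 1) +
          α * (a ^ (2 ^ (2 * k)) / b ^ (2 ^ k) * z ^ (2 ^ k - 1)) + β = 0) ∧
    ((∀ X : GaloisField 2 m, X ^ (2 ^ k + 1) + α * X + β ≠ 0) →
      ∀ Y : GaloisField 2 m, T Y = 0 → Y = 0) :=
  stmt13_general m k α β a b hab T hT
end

section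
/- Let $m$ be even, $j$ even, $k$ coprime to $m$. Then the set $S = \{a^{2^k+1}(t^{2^k}+t)^{1-2^j} : a, t \in \mathbb{F}_{2^m}, t^{2^k}+t \neq 0\} \cup \{0\}$ consists exactly of $0$ together with all nonzero cubes of $\mathbb{F}_{2^m}$; hence a nonzero $\alpha \in \mathbb{F}_{2^m}$ lies outside $S$ if and only if $\alpha$ is a non-cube. -/
/-!
Since `k` is odd and `j` is even, `3` divides both `2^k + 1` and `2^j - 1`, so every element
`a^(2^k+1) (t^(2^k)+t)^(1-2^j)` is a cube. Conversely, `gcd(2^k + 1, 2^m - 1)` divides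
`gcd(2^(2k) - 1, 2^m - 1) = 2^gcd(2k,m) - 1 = 3`, so by Bézout in the group `𝔽_{2^m}ˣ` of
order `2^m - 1` every cube is a `(2^k+1)`-th power; it remains to pick one `t` outside the fixed
field `𝔽_{2^gcd(k,m)} = 𝔽_2` of `x ↦ x^(2^k)` and absorb the factor `(t^(2^k)+t)^(1-2^j)`,
itself a cube.
-/

namespace Nat

lemma Coprime.odd_of_even_right {k m : ℕ} (hkm : Coprime k m) (hm : Even m) : Odd k :=
  (Nat.coprime_comm.mp (hkm.coprime_dvd_right hm.two_dvd)).odd_of_left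

lemma three_dvd_two_pow_add_one {k : ℕ} (hk : Odd k) : 3 ∣ 2 ^ k + 1 := by
  simpa using hk.nat_add_dvd_pow_add_pow 2 1

lemma three_dvd_two_pow_sub_one {j : ℕ} (hj : Even j) : 3 ∣ 2 ^ j - 1 := by
  obtain ⟨i, rfl⟩ := hj
  simpa [← two_mul, pow_mul] using Nat.sub_dvd_pow_sub_pow 4 1 i

lemma two_pow_add_one_dvd_two_pow_two_mul_sub_one (k : ℕ) : 2 ^ k + 1 ∣ 2 ^ (2 * k) - 1 :=
  ⟨2 ^ k - 1, by rw [mul_comm 2 k, pow_mul, ← Nat.sq_sub_sq, one_pow]⟩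

lemma gcd_two_pow_add_one_two_pow_sub_one_dvd_three {k m : ℕ} (hm : Even m)
    (hkm : Coprime k m) : gcd (2 ^ k + 1) (2 ^ m - 1) ∣ 3 := by
  have hk : Odd k := hkm.odd_of_even_right hm
  have hgcd : gcd (2 * k) m = 2 := by
    rw [Nat.gcd_comm, Coprime.gcd_mul m (Nat.coprime_two_left.mpr hk),
      Nat.gcd_eq_right hm.two_dvd, Nat.gcd_comm, hkm.gcd_eq_one, mul_one]
  calc gcd (2 ^ k + 1) (2 ^ m - 1) ∣ gcd (2 ^ (2 * k) - 1) (2 ^ m - 1) :=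
        gcd_dvd_gcd_of_dvd_left _ (two_pow_add_one_dvd_two_pow_two_mul_sub_one k)
    _ = 3 := by rw [pow_sub_one_gcd_pow_sub_one, hgcd]; rfl

end Nat

section Group

variable {G : Type*} [Group G]

lemma exists_pow_eq_pow_of_gcd_card_dvd {n d : ℕ} (h : n.gcd (Nat.card G) ∣ d) (y : G) :
    ∃ a : G, a ^ n = y ^ d := by
  obtain ⟨e, rfl⟩ := h
  refine ⟨y ^ (n.gcdA (Nat.card G) * e), ?_⟩
  have hcard : y ^ ((Nat.card G : ℤ) * n.gcdB (Nat.card G) * e) = 1 := by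
    rw [mul_assoc, zpow_mul, zpow_natCast, pow_card_eq_one', one_zpow]
  rw [← zpow_natCast, ← zpow_mul, ← zpow_natCast, Nat.cast_mul, Nat.gcd_eq_gcd_ab, add_mul,
    zpow_add, hcard, mul_one, mul_right_comm, mul_comm (n : ℤ)]

lemma eq_one_of_pow_two_pow_sub_one_eq_one {k m : ℕ} (hG : Nat.card G = 2 ^ m - 1)
    (hkm : k.Coprime m) {u : G} (hu : u ^ (2 ^ k - 1) = 1) : u = 1 := by
  have h := pow_gcd_eq_one.mpr ⟨hu, hG ▸ pow_card_eq_one'⟩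
  rwa [Nat.pow_sub_one_gcd_pow_sub_one, hkm.gcd_eq_one, pow_one, pow_one] at h

end Group

lemma exists_cube_eq_pow_mul_pow {M : Type*} [CommMonoid M] {k j : ℕ} (hk : Odd k)
    (hj : Even j) (a b : M) : ∃ y : M, a ^ (2 ^ k + 1) * b ^ (2 ^ j - 1) = y ^ 3 := by
  obtain ⟨c, hc⟩ := Nat.three_dvd_two_pow_add_one hk
  obtain ⟨d, hd⟩ := Nat.three_dvd_two_pow_sub_one hj
  exact ⟨a ^ c * b ^ d, by rw [hc, hd, mul_pow, ← pow_mul, ← pow_mul, mul_comm c, mul_comm d]⟩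

section FiniteField

variable {F : Type*} [Field F] {m k j : ℕ}

lemma exists_pow_two_pow_add_one_eq_cube (hF : Nat.card F = 2 ^ m) (hm : Even m)
    (hkm : k.Coprime m) (x : F) : ∃ a : F, a ^ (2 ^ k + 1) = x ^ 3 := by
  rcases eq_or_ne x 0 with rfl | hx
  · exact ⟨0, by simp⟩
  have hunits : Nat.card Fˣ = 2 ^ m - 1 := by rw [Nat.card_units, hF]
  obtain ⟨a, ha⟩ := exists_pow_eq_pow_of_gcd_card_dvd
    (hunits ▸ Nat.gcd_two_pow_add_one_two_pow_sub_one_dvd_three hm hkm) (Units.mk0 x hx)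
  exact ⟨a, by simpa using congrArg Units.val ha⟩

lemma exists_pow_two_pow_ne_self (hF : Nat.card F = 2 ^ m) (hm : 1 < m) (hkm : k.Coprime m) :
    ∃ t : F, t ^ 2 ^ k ≠ t := by
  have hunits : Nat.card Fˣ = 2 ^ m - 1 := by rw [Nat.card_units, hF]
  have h4 : 2 ^ 2 ≤ 2 ^ m := Nat.pow_le_pow_right two_pos hm
  have : Finite Fˣ := Nat.finite_of_card_ne_zero (by omega)
  have : Nontrivial Fˣ := Finite.one_lt_card_iff_nontrivial.mp (by omega)
  obtain ⟨u, hu⟩ := exists_ne (1 : Fˣ)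
  refine ⟨u, fun h => hu (eq_one_of_pow_two_pow_sub_one_eq_one hunits hkm ?_)⟩
  apply mul_right_cancel (b := u)
  rw [pow_sub_one_mul (by positivity), one_mul]
  exact Units.ext (by simpa using h)

lemma setOf_pow_mul_inv_pow_union_zero_eq [CharP F 2] (hF : Nat.card F = 2 ^ m) (hm : Even m)
    (hm0 : 0 < m) (hkm : k.Coprime m) (hj : Even j) :
    {w : F | ∃ a t : F, t ^ (2 ^ k) + t ≠ 0 ∧
        w = a ^ (2 ^ k + 1) * ((t ^ (2 ^ k) + t)⁻¹) ^ (2 ^ j - 1)} ∪ {0} =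
      insert 0 {x : F | ∃ y : F, y ≠ 0 ∧ x = y ^ 3} := by
  have hk : Odd k := hkm.odd_of_even_right hm
  ext w
  simp only [Set.mem_union, Set.mem_ofPred_eq, Set.mem_singleton_iff, Set.mem_insert_iff]
  constructor
  · rintro (⟨a, t, -, rfl⟩ | rfl)
    · obtain ⟨y, hy⟩ := exists_cube_eq_pow_mul_pow hk hj a (t ^ 2 ^ k + t)⁻¹
      rcases eq_or_ne y 0 with rfl | hy0
      · exact Or.inl (by simpa using hy)
      · exact Or.inr ⟨y, hy0, hy⟩
    · exact Or.inl rfl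
  · rintro (rfl | ⟨y, -, rfl⟩)
    · exact Or.inr rfl
    obtain ⟨t, ht⟩ := exists_pow_two_pow_ne_self hF (by obtain ⟨i, rfl⟩ := hm; omega) hkm
    have hz : t ^ 2 ^ k + t ≠ 0 := fun h => ht (CharTwo.add_eq_zero.mp h)
    obtain ⟨d, hd⟩ := Nat.three_dvd_two_pow_sub_one hj
    obtain ⟨a, ha⟩ := exists_pow_two_pow_add_one_eq_cube hF hm hkm (y * (t ^ 2 ^ k + t) ^ d)
    refine Or.inl ⟨a, t, hz, ?_⟩
    rw [ha, hd, inv_pow, pow_mul, mul_pow, mul_assoc, ← pow_mul, mul_comm d, pow_mul,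
      mul_inv_cancel₀ (pow_ne_zero _ (pow_ne_zero _ hz)), mul_one]

end FiniteField

theorem stmt15_general (m k j : ℕ) (hm : Even m) (hm0 : 0 < m)
    (hgcd : Nat.gcd k m = 1) (hj : Even j) :
    ({w : GaloisField 2 m | ∃ a t : GaloisField 2 m, t ^ (2 ^ k) + t ≠ 0 ∧
        w = a ^ (2 ^ k + 1) * ((t ^ (2 ^ k) + t)⁻¹) ^ (2 ^ j - 1)} ∪ {0}) =
      insert (0 : GaloisField 2 m)
        {x : GaloisField 2 m | ∃ y : GaloisField 2 m, y ≠ 0 ∧ x = y ^ 3} ∧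
    ∀ α : GaloisField 2 m, α ≠ 0 →
      (α ∉ ({w : GaloisField 2 m | ∃ a t : GaloisField 2 m, t ^ (2 ^ k) + t ≠ 0 ∧
          w = a ^ (2 ^ k + 1) * ((t ^ (2 ^ k) + t)⁻¹) ^ (2 ^ j - 1)} ∪ {0}) ↔
        ¬∃ y : GaloisField 2 m, y ≠ 0 ∧ α = y ^ 3) := by
  have hS := setOf_pow_mul_inv_pow_union_zero_eq (GaloisField.card 2 m hm0.ne') hm hm0 hgcd hj
  refine ⟨hS, fun α hα => ?_⟩
  rw [hS, Set.mem_insert_iff, Set.mem_ofPred_eq, or_iff_right hα]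

/-- For `m` even, `gcd(k,m)=1` and `j` even, the set
`S = {a^(2^k+1)(t^(2^k)+t)^(1-2^j) : a,t ∈ 𝔽_{2^m}, t^(2^k)+t ≠ 0} ∪ {0}` consists
exactly of `0` together with all nonzero cubes; hence a nonzero `α` lies outside `S`
iff `α` is a non-cube. (Here `z^(1-2^j)` means `(z⁻¹)^(2^j-1)`.) -/
theorem stmt15 (m k j : ℕ) (hm : Even m) (hm0 : 0 < m) (hk : 0 < k)
    (hgcd : Nat.gcd k m = 1) (hj : Even j) (hj0 : 0 < j) :
    ({w : GaloisField 2 m | ∃ a t : GaloisField 2 m, t ^ (2 ^ k) + t ≠ 0 ∧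
        w = a ^ (2 ^ k + 1) * ((t ^ (2 ^ k) + t)⁻¹) ^ (2 ^ j - 1)} ∪ {0}) =
      insert (0 : GaloisField 2 m)
        {x : GaloisField 2 m | ∃ y : GaloisField 2 m, y ≠ 0 ∧ x = y ^ 3} ∧
    ∀ α : GaloisField 2 m, α ≠ 0 →
      (α ∉ ({w : GaloisField 2 m | ∃ a t : GaloisField 2 m, t ^ (2 ^ k) + t ≠ 0 ∧
          w = a ^ (2 ^ k + 1) * ((t ^ (2 ^ k) + t)⁻¹) ^ (2 ^ j - 1)} ∪ {0}) ↔
        ¬∃ y : GaloisField 2 m, y ≠ 0 ∧ α = y ^ 3) :=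
  stmt15_general m k j hm hm0 hgcd hj
end
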